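/- arXiv:1608.07636 — 2 statements merged into one kernel-verified Lean document; each statement's English description precedes it below -/
import Mathlib

section
/- Consider the scalar linear recursion on covariances: σ_X(0) = b q₀ Σ_{j=0}^{θ_max} σ_X(j+1) + 1 and σ_X(i) = b q₀ Σ_{j=0}^{θ_max} σ_X(j+1-i) for 1 ≤ i ≤ θ_max+1, where q₀ = 1/(θ_max+1), 0 < b < 1, and σ_X(-i) = σ_X(i). Then the unique solution satisfies σ_X(0) = ((1-b)θ_max + 1)/((1-b)θ_max + (1-b²)) and σ_X(i) = b/((1-b)θ_max + (1-b²)) for 1 ≤ i ≤ θ_max+1. -/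
/-!
The claimed values form an even solution, so the difference `d` of two even solutions is an even
function with `d i = (b / N) ∑_{j < N} d (j + 1 - i)` for `0 ≤ i ≤ N`, where
`N = θmax + 1`. These sums only involve indices in `[-N, N]` and `d` is even, so the maximum of
`|d|` over `[-N, N]` is at most `b` times itself; since `b < 1` it vanishes.
-/

open Finset

/-- The `i`-th equation of the recursion reads `σ i = c * windowSum N σ i (+ 1 if i = 0)`. -/
def windowSum (N : ℕ) (f : ℤ → ℝ) (i : ℤ) : ℝ :=
  ∑ j ∈ range N, f ((j : ℤ) + 1 - i)

section WindowSum

variable {N : ℕ}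

lemma windowSum_sub (f g : ℤ → ℝ) (i : ℤ) :
    windowSum N (f - g) i = windowSum N f i - windowSum N g i :=
  sum_sub_distrib ..

lemma sum_range_ite_add_one_sub_eq_zero (x : ℝ) (i : ℤ) :
    ∑ j ∈ range N, (if (j : ℤ) + 1 - i = 0 then x else 0) =
      if 1 ≤ i ∧ i ≤ N then x else 0 := by
  split_ifs with hi
  · have hmem : (i - 1).toNat ∈ range N := by rw [mem_range]; omega
    calc _ = ∑ j ∈ range N, (if (i - 1).toNat = j then x else 0) :=
          sum_congr rfl fun j _ => by split_ifs <;> first | rfl | omega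
      _ = x := by rw [sum_ite_eq, if_pos hmem]
  · refine sum_eq_zero fun j hj => if_neg ?_
    rw [mem_range] at hj
    omega

lemma windowSum_ite_eq_zero (A B : ℝ) (i : ℤ) :
    windowSum N (fun k => if k = 0 then A else B) i =
      N * B + if 1 ≤ i ∧ i ≤ N then A - B else 0 := by
  have hsplit : ∀ k : ℤ, (if k = 0 then A else B) = B + if k = 0 then A - B else 0 := by
    intro k
    split_ifs <;> ring
  simp only [windowSum, hsplit, sum_add_distrib, sum_const, card_range, nsmul_eq_mul,
    sum_range_ite_add_one_sub_eq_zero]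

lemma abs_windowSum_le {f : ℤ → ℝ} {M : ℝ} {i : ℤ} (hi0 : 0 ≤ i) (hiN : i ≤ N)
    (hM : ∀ k ∈ Icc (-(N : ℤ)) N, |f k| ≤ M) : |windowSum N f i| ≤ N * M :=
  calc |windowSum N f i| ≤ ∑ j ∈ range N, |f ((j : ℤ) + 1 - i)| := abs_sum_le_sum_abs _ _
    _ ≤ ∑ _j ∈ range N, M := sum_le_sum fun j hj => hM _ <| by
        rw [mem_range] at hj
        rw [mem_Icc]
        omega
    _ = N * M := by rw [sum_const, card_range, nsmul_eq_mul]

end WindowSum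

lemma eq_zero_of_forall_abs_le_mul {ι : Type*} {s : Finset ι} {f : ι → ℝ} {ρ : ℝ}
    (hρ : ρ < 1) (h : ∀ M, (∀ k ∈ s, |f k| ≤ M) → ∀ k ∈ s, |f k| ≤ ρ * M) :
    ∀ i ∈ s, f i = 0 := by
  intro i hi
  set M := s.sup' ⟨i, hi⟩ fun k => |f k|
  have hM : ∀ k ∈ s, |f k| ≤ M := fun k hk => le_sup' (fun k => |f k|) hk
  have hMρ : M ≤ ρ * M := sup'_le _ _ (h M hM)
  have hM0 : 0 ≤ M := (abs_nonneg _).trans (hM i hi)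
  have hM_nonpos : M ≤ 0 := by nlinarith
  exact abs_nonpos_iff.mp ((hM i hi).trans hM_nonpos)

theorem eq_of_eq_mul_windowSum_add {N : ℕ} {c : ℝ} (hc : 0 ≤ c) (hcN : c * N < 1)
    {f g r : ℤ → ℝ} (hf_even : ∀ i, f (-i) = f i) (hg_even : ∀ i, g (-i) = g i)
    (hf : ∀ i : ℤ, 0 ≤ i → i ≤ N → f i = c * windowSum N f i + r i)
    (hg : ∀ i : ℤ, 0 ≤ i → i ≤ N → g i = c * windowSum N g i + r i) :
    ∀ i : ℤ, 0 ≤ i → i ≤ N → f i = g i := by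
  have hd_even : ∀ i, (f - g) (-i) = (f - g) i := fun i => by
    simp only [Pi.sub_apply, hf_even, hg_even]
  have hd : ∀ i : ℤ, 0 ≤ i → i ≤ N → (f - g) i = c * windowSum N (f - g) i := by
    intro i hi0 hiN
    rw [windowSum_sub, Pi.sub_apply, hf i hi0 hiN, hg i hi0 hiN]
    ring
  have hcontract : ∀ M, (∀ k ∈ Icc (-(N : ℤ)) N, |(f - g) k| ≤ M) →
      ∀ k ∈ Icc (-(N : ℤ)) N, |(f - g) k| ≤ c * N * M := by
    intro M hM
    have hnonneg (k : ℤ) (hk0 : 0 ≤ k) (hkN : k ≤ N) : |(f - g) k| ≤ c * N * M :=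
      calc |(f - g) k| = c * |windowSum N (f - g) k| := by
            rw [hd k hk0 hkN, abs_mul, abs_of_nonneg hc]
        _ ≤ c * (N * M) := mul_le_mul_of_nonneg_left (abs_windowSum_le hk0 hkN hM) hc
        _ = c * N * M := by ring
    intro k hk
    rw [mem_Icc] at hk
    rcases le_total 0 k with hk0 | hk0
    · exact hnonneg k hk0 hk.2
    · rw [← hd_even k]
      exact hnonneg (-k) (by omega) (by omega)
  intro i hi0 hiN
  exact sub_eq_zero.mp <|
    eq_zero_of_forall_abs_le_mul hcN hcontract i (mem_Icc.mpr ⟨by omega, hiN⟩)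

noncomputable def covarianceSolution (θ : ℕ) (b : ℝ) (k : ℤ) : ℝ :=
  if k = 0 then ((1 - b) * θ + 1) / ((1 - b) * θ + (1 - b ^ 2))
  else b / ((1 - b) * θ + (1 - b ^ 2))

section CovarianceSolution

variable {θ : ℕ} {b : ℝ}

lemma covarianceSolution_neg (k : ℤ) :
    covarianceSolution θ b (-k) = covarianceSolution θ b k := by
  simp only [covarianceSolution, neg_eq_zero]

lemma covarianceSolution_eq_mul_windowSum_add (hD : (1 - b) * θ + (1 - b ^ 2) ≠ 0) {i : ℤ}
    (hi0 : 0 ≤ i) (hiN : i ≤ ↑(θ + 1)) :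
    covarianceSolution θ b i =
      b * (1 / ((θ : ℝ) + 1)) * windowSum (θ + 1) (covarianceSolution θ b) i +
        if i = 0 then 1 else 0 := by
  unfold covarianceSolution
  rw [windowSum_ite_eq_zero]
  push_cast
  rcases hi0.eq_or_lt with rfl | hpos
  · rw [if_pos rfl, if_pos rfl, if_neg (by omega)]
    field_simp
    ring
  · rw [if_neg hpos.ne', if_neg hpos.ne', if_pos ⟨hpos, by exact_mod_cast hiN⟩]
    field_simp
    ring

end CovarianceSolution

theorem scalar_covariance_recursion_solution_general
    (θmax : ℕ) (b : ℝ) (hb0 : 0 < b) (hb1 : b < 1)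
    (σX : ℤ → ℝ)
    (heven : ∀ i : ℤ, σX (-i) = σX i)
    (h0 : σX 0 = b * (1 / ((θmax : ℝ) + 1)) *
        (∑ j ∈ Finset.range (θmax + 1), σX ((j : ℤ) + 1)) + 1)
    (hi : ∀ i : ℤ, 1 ≤ i → i ≤ (θmax : ℤ) + 1 →
        σX i = b * (1 / ((θmax : ℝ) + 1)) *
          (∑ j ∈ Finset.range (θmax + 1), σX ((j : ℤ) + 1 - i))) :
    σX 0 = ((1 - b) * (θmax : ℝ) + 1) / ((1 - b) * (θmax : ℝ) + (1 - b ^ 2)) ∧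
    ∀ i : ℤ, 1 ≤ i → i ≤ (θmax : ℤ) + 1 →
      σX i = b / ((1 - b) * (θmax : ℝ) + (1 - b ^ 2)) := by
  have hD : (1 - b) * (θmax : ℝ) + (1 - b ^ 2) ≠ 0 := by
    have hb1' : 0 < 1 - b := by linarith
    rw [show (1 - b) * (θmax : ℝ) + (1 - b ^ 2) = (1 - b) * (θmax + 1 + b) by ring]
    positivity
  have hσX : ∀ i : ℤ, 0 ≤ i → i ≤ ↑(θmax + 1) → σX i =
      b * (1 / ((θmax : ℝ) + 1)) * windowSum (θmax + 1) σX i + if i = 0 then 1 else 0 := by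
    intro i hi0 hiN
    rcases hi0.eq_or_lt with rfl | hpos
    · simpa only [windowSum, sub_zero, if_pos] using h0
    · rw [if_neg hpos.ne', add_zero]
      exact hi i hpos (by exact_mod_cast hiN)
  have hcN : b * (1 / ((θmax : ℝ) + 1)) * ↑(θmax + 1) < 1 := by
    push_cast
    field_simp
    exact hb1
  have hσX_eq := eq_of_eq_mul_windowSum_add (by positivity) hcN heven covarianceSolution_neg hσX
    fun i hi0 hiN => covarianceSolution_eq_mul_windowSum_add hD hi0 hiN
  refine ⟨hσX_eq 0 le_rfl (by omega), fun i hi1 hiN => ?_⟩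
  rw [hσX_eq i (by omega) (by omega), covarianceSolution, if_neg (by omega)]

theorem scalar_covariance_recursion_solution
    (θmax : ℕ) (hθ : 2 ≤ θmax) (b : ℝ) (hb0 : 0 < b) (hb1 : b < 1)
    (σX : ℤ → ℝ)
    (heven : ∀ i : ℤ, σX (-i) = σX i)
    (h0 : σX 0 = b * (1 / ((θmax : ℝ) + 1)) *
        (∑ j ∈ Finset.range (θmax + 1), σX ((j : ℤ) + 1)) + 1)
    (hi : ∀ i : ℤ, 1 ≤ i → i ≤ (θmax : ℤ) + 1 →
        σX i = b * (1 / ((θmax : ℝ) + 1)) *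
          (∑ j ∈ Finset.range (θmax + 1), σX ((j : ℤ) + 1 - i))) :
    σX 0 = ((1 - b) * (θmax : ℝ) + 1) / ((1 - b) * (θmax : ℝ) + (1 - b ^ 2)) ∧
    ∀ i : ℤ, 1 ≤ i → i ≤ (θmax : ℤ) + 1 →
      σX i = b / ((1 - b) * (θmax : ℝ) + (1 - b ^ 2)) :=
  scalar_covariance_recursion_solution_general θmax b hb0 hb1 σX heven h0 hi
end

section
/- Let θ_max ≥ 2 and consider the scalar AR model with uniform random lag: x_t = b·x_{t-Θ-1} + w_t where Θ is uniform on {0,…,θ_max}, independent across time, 0 < b < 1, w_t i.i.d. standard normal. The stationary autocovariances are σ(0) = ((1-b)θ_max+1)/((1-b)θ_max+(1-b²)), σ(i) = b/((1-b)θ_max+(1-b²)) for 1 ≤ i ≤ θ_max+1, and σ(θ_max+2) = b·σ(θ_max+1); in particular σ(θ_max+2) ≠ σ(θ_max+1), and the (θ_max+1)×(θ_max+1) Toeplitz matrix M₁ with M₁(i,j) = σ(θ_max+1+j−i) is invertible. -/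
/-!
On `1 ≤ i ≤ θmax + 1` the closed forms make `σ` constant, `σ i = c := b / D` with `D` the common
denominator, so the recursion there reduces to two scalar identities, and `σ (θmax + 2) = b * c`.
The Toeplitz matrix `M₁` is therefore `c` on and below the diagonal and `b * c` on the
superdiagonal; subtracting each row from the next one makes it upper triangular,
with determinant `c * ((1 - b) * c) ^ θmax ≠ 0`.
-/

open Finset

theorem Matrix.det_of_forall_le_eq_const {R : Type*} [CommRing R] {n : ℕ}
    (A : Matrix (Fin (n + 1)) (Fin (n + 1)) R) (c : R) (hA : ∀ i j, j ≤ i → A i j = c) :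
    A.det = c * ∏ i : Fin n, (c - A i.castSucc i.succ) := by
  let B : Matrix (Fin (n + 1)) (Fin (n + 1)) R :=
    Matrix.of (Fin.cons (A 0) fun i => A i.succ - A i.castSucc)
  have hB : A.det = B.det :=
    det_eq_of_forall_row_eq_smul_add_pred 1 (fun _ => rfl) fun i j => by simp [B]
  have hB_upper : B.IsUpperTriangular := by
    intro i j hji
    cases i using Fin.cases with
    | zero => exact absurd hji (Fin.not_lt_zero j)
    | succ i =>
      have hj : j ≤ i.castSucc := Fin.le_castSucc_iff.mpr hji
      have hj' : j ≤ i.succ := le_of_lt hji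
      simp [B, hA _ _ hj, hA _ _ hj']
  rw [hB, det_of_isUpperTriangular hB_upper, Fin.prod_univ_succ]
  simp [B, hA 0 0 le_rfl, hA _ _ le_rfl]

theorem sum_range_natAbs_sub_of_eq_const {M : Type*} [AddCommMonoid M] {f : ℕ → M} {c : M}
    {m i : ℕ} (hf : ∀ k, 1 ≤ k → k ≤ m → f k = c) (hi : 1 ≤ i) (him : i ≤ m) :
    ∑ j ∈ range m, f ((j : ℤ) + 1 - i).natAbs = f 0 + (m - 1) • c := by
  have hmem : i - 1 ∈ range m := mem_range.mpr (by omega)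
  rw [← add_sum_erase _ _ hmem, sum_congr rfl fun j hj => hf _ ?_ ?_, sum_const,
    card_erase_of_mem hmem, card_range]
  · congr 2; omega
  all_goals
    have := mem_range.mp (mem_of_mem_erase hj)
    have := ne_of_mem_erase hj
    omega

theorem closedForm_satisfies_recursion {θmax : ℕ} {b D : ℝ}
    (hD : D = (1 - b) * θmax + (1 - b ^ 2)) (hD0 : D ≠ 0) {σ : ℕ → ℝ}
    (h0 : σ 0 = ((1 - b) * θmax + 1) / D) (h1 : ∀ i, 1 ≤ i → i ≤ θmax + 1 → σ i = b / D)
    {i : ℕ} (hi : i ≤ θmax + 1) :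
    σ i = b * (1 / ((θmax : ℝ) + 1)) *
        (∑ j ∈ range (θmax + 1), σ (((j : ℤ) + 1 - (i : ℤ)).natAbs)) +
      (if i = 0 then 1 else 0) := by
  have hθ1 : (θmax : ℝ) + 1 ≠ 0 := by positivity
  rcases Nat.eq_zero_or_pos i with rfl | hi0
  · rw [sum_congr rfl fun j hj => h1 _ (by omega) (by simp at hj; omega), sum_const,
      card_range, nsmul_eq_mul, h0, if_pos rfl]
    push_cast
    field_simp
    rw [hD]
    ring
  · rw [sum_range_natAbs_sub_of_eq_const h1 hi0 hi, h1 i hi0 hi, h0, if_neg hi0.ne',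
      nsmul_eq_mul, Nat.add_sub_cancel]
    field_simp
    rw [hD]
    ring

theorem uniform_lag_autocovariances_general (θmax : ℕ)
    (b : ℝ) (hb0 : 0 < b) (hb1 : b < 1)
    (σ : ℕ → ℝ)
    (h0 : σ 0 = ((1 - b) * (θmax : ℝ) + 1) / ((1 - b) * (θmax : ℝ) + (1 - b ^ 2)))
    (h1 : ∀ i : ℕ, 1 ≤ i → i ≤ θmax + 1 →
        σ i = b / ((1 - b) * (θmax : ℝ) + (1 - b ^ 2)))
    (h2 : ∀ i : ℕ, θmax + 1 < i →
        σ i = b * (1 / ((θmax : ℝ) + 1)) * ∑ j ∈ Finset.range (θmax + 1), σ (i - j - 1))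
    (M₁ : Matrix (Fin (θmax + 1)) (Fin (θmax + 1)) ℝ)
    (hM : ∀ i j : Fin (θmax + 1), M₁ i j = σ (θmax + 1 + (j : ℕ) - (i : ℕ))) :
    -- the closed forms satisfy the defining recursion for 0 ≤ i ≤ θmax + 1
    (∀ i : ℕ, i ≤ θmax + 1 →
        σ i = b * (1 / ((θmax : ℝ) + 1)) *
            (∑ j ∈ Finset.range (θmax + 1), σ (((j : ℤ) + 1 - (i : ℤ)).natAbs)) +
          (if i = 0 then 1 else 0)) ∧
    σ (θmax + 2) = b * σ (θmax + 1) ∧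
    σ (θmax + 2) ≠ σ (θmax + 1) ∧
    M₁.det ≠ 0 := by
  set D := (1 - b) * (θmax : ℝ) + (1 - b ^ 2) with hD_def
  have hD : 0 < D := by nlinarith
  have hc : 0 < b / D := div_pos hb0 hD
  have hσ_top : σ (θmax + 1) = b / D := h1 _ (by omega) le_rfl
  have hσ_next : σ (θmax + 2) = b * (b / D) := by
    rw [h2 _ (by omega), sum_congr rfl fun j hj => h1 _ (by simp at hj; omega) (by omega),
      sum_const, card_range, nsmul_eq_mul]
    push_cast
    field_simp
  refine ⟨fun i hi => closedForm_satisfies_recursion hD_def hD.ne' h0 h1 hi,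
    hσ_next.trans (by rw [hσ_top]), ?_, ?_⟩
  · rw [hσ_next, hσ_top]
    nlinarith
  · rw [M₁.det_of_forall_le_eq_const (b / D) fun i j hji => by
      rw [hM]; exact h1 _ (by omega) (by omega)]
    have hsuper : ∀ x : ℕ, θmax + 1 + (x + 1) - x = θmax + 2 := by omega
    simp only [hM, Fin.val_castSucc, Fin.val_succ, hsuper, hσ_next, prod_const]
    refine mul_ne_zero hc.ne' (pow_ne_zero _ ?_)
    nlinarith

theorem uniform_lag_autocovariances (θmax : ℕ) (hθ : 2 ≤ θmax)
    (b : ℝ) (hb0 : 0 < b) (hb1 : b < 1)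
    (σ : ℕ → ℝ)
    (h0 : σ 0 = ((1 - b) * (θmax : ℝ) + 1) / ((1 - b) * (θmax : ℝ) + (1 - b ^ 2)))
    (h1 : ∀ i : ℕ, 1 ≤ i → i ≤ θmax + 1 →
        σ i = b / ((1 - b) * (θmax : ℝ) + (1 - b ^ 2)))
    (h2 : ∀ i : ℕ, θmax + 1 < i →
        σ i = b * (1 / ((θmax : ℝ) + 1)) * ∑ j ∈ Finset.range (θmax + 1), σ (i - j - 1))
    (M₁ : Matrix (Fin (θmax + 1)) (Fin (θmax + 1)) ℝ)
    (hM : ∀ i j : Fin (θmax + 1), M₁ i j = σ (θmax + 1 + (j : ℕ) - (i : ℕ))) :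
    -- the closed forms satisfy the defining recursion for 0 ≤ i ≤ θmax + 1
    (∀ i : ℕ, i ≤ θmax + 1 →
        σ i = b * (1 / ((θmax : ℝ) + 1)) *
            (∑ j ∈ Finset.range (θmax + 1), σ (((j : ℤ) + 1 - (i : ℤ)).natAbs)) +
          (if i = 0 then 1 else 0)) ∧
    σ (θmax + 2) = b * σ (θmax + 1) ∧
    σ (θmax + 2) ≠ σ (θmax + 1) ∧
    M₁.det ≠ 0 :=
  uniform_lag_autocovariances_general θmax b hb0 hb1 σ h0 h1 h2 M₁ hM
end
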